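/- Assume Ann_A(M) = 0. A K-derivation d of the Lie algebra L = E_∞ satisfies d(L_0) ⊆ L_0, d(L_+) ⊆ L_+, d(L_-) ⊆ L_- if and only if d = d_{S,T} for some S ∈ S_E and T ∈ T_E; such S and T are unique, and the map (S, T) ↦ d_{S,T} is a Lie algebra isomorphism from S_E ⊕ T_E (with bracket [(S,T),(S',T')] = ([S,S'] + [T,T'], [S,T'] + [T,S'])) onto the Lie algebra of grading-preserving K-derivations of L. -/
import Mathlib


/- Purely even case of the paper's super setting: K a commutative unital ring
containing 1/2, A a commutative unital associative K-algebra, M an A-module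
(hence also a K-module), q : M × M → A a symmetric A-bilinear form. -/

variable {K A M : Type*} [CommRing K] [Invertible (2 : K)] [CommRing A] [Algebra K A]
  [AddCommGroup M] [Module A M] [Module K M] [IsScalarTower K A M]
  [SMulCommClass A K M] [SMulCommClass K A M]

variable (K) in
/-- `a·id_M`, viewed as a `K`-linear endomorphism of `M`. -/
def aId (a : A) : Module.End K M := a • (1 : Module.End K M)

variable (K) in
/-- `E_{m,n}(p) = q(n,p)·m − q(m,p)·n`, viewed as a `K`-linear endomorphism of `M`. -/
noncomputable def EmapK (q : M →ₗ[A] M →ₗ[A] A) (m n : M) : Module.End K M :=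
  ((q n).restrictScalars K).smulRight m - ((q m).restrictScalars K).smulRight n

variable (K) in
/-- `osp(q)`, realized inside `End_K(M)`: the set of `A`-linear endomorphisms `x`
of `M` with `q(x(m),n) + q(x(n),m) = 0` for all `m, n`. -/
def ospK (q : M →ₗ[A] M →ₗ[A] A) : Set (Module.End K M) :=
  {x | (∀ (a : A) (p : M), x (a • p) = a • x p) ∧
       ∀ m n : M, q (x m) n + q (x n) m = 0}

variable (K) in
/-- `eosp(q)`: the additive subgroup generated by the `E_{m,n}`. -/
noncomputable def eospK (q : M →ₗ[A] M →ₗ[A] A) : AddSubgroup (Module.End K M) :=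
  AddSubgroup.closure {f | ∃ m n : M, f = EmapK K q m n}

variable (K) in
/-- The bracket on `E_∞ = A × M × M × E`, where `E` is a Lie subalgebra of
`osp(q)` containing `eosp(q)` (given as a `K`-submodule of `End_K(M)` closed
under commutators and containing all `E_{m,n}`):
`[(a,m,n,x),(a',m',n',x')] = (q(m,n') − q(n,m'),
  a·m' + x(m') − a'·m − x'(m), −a·n' + x(n') + a'·n − x'(n),
  E_{m,n'} + E_{n,m'} + [x,x'])`. -/
noncomputable def brEinf (q : M →ₗ[A] M →ₗ[A] A) (E : Submodule K (Module.End K M))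
    (hEe : ∀ m n : M, EmapK K q m n ∈ E)
    (hbr : ∀ x ∈ E, ∀ y ∈ E, x * y - y * x ∈ E)
    (u v : A × M × M × E) : A × M × M × E :=
  (q u.2.1 v.2.2.1 - q u.2.2.1 v.2.1,
   u.1 • v.2.1 + (u.2.2.2 : Module.End K M) v.2.1 - v.1 • u.2.1
     - (v.2.2.2 : Module.End K M) u.2.1,
   -(u.1 • v.2.2.1) + (u.2.2.2 : Module.End K M) v.2.2.1 + v.1 • u.2.2.1
     - (v.2.2.2 : Module.End K M) u.2.2.1,
   ⟨EmapK K q u.2.1 v.2.2.1 + EmapK K q u.2.2.1 v.2.1 +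
      ((u.2.2.2 : Module.End K M) * (v.2.2.2 : Module.End K M)
        - (v.2.2.2 : Module.End K M) * (u.2.2.2 : Module.End K M)),
    add_mem (add_mem (hEe _ _) (hEe _ _)) (hbr _ u.2.2.2.2 _ v.2.2.2.2)⟩)

variable (K) in
/-- `S_E`: the set of `S ∈ End_K(M)` satisfying (S1) `[S, a·id_M] ∈ A·id_M`,
(S2) `[S, q(m,n)·id_M] = (q(S(m),n) + q(S(n),m))·id_M`, and (S3) `[S, E] ⊆ E`. -/
def SE (q : M →ₗ[A] M →ₗ[A] A) (E : Set (Module.End K M)) : Set (Module.End K M) :=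
  {S | (∀ a : A, ∃ b : A, S * aId K a - aId K a * S = aId K b) ∧
       (∀ m n : M, S * aId K (q m n) - aId K (q m n) * S
          = aId K (q (S m) n + q (S n) m)) ∧
       (∀ x ∈ E, S * x - x * S ∈ E)}

variable (K) in
/-- `T_E`: the set of `T ∈ End_K(M)` satisfying (T1) `[T, a·id_M] ∈ E`,
(T2) `[T, q(m,n)·id_M] = E_{T(m),n} + E_{T(n),m}`, and (T3) `[T, E] ⊆ A·id_M`. -/
def TE (q : M →ₗ[A] M →ₗ[A] A) (E : Set (Module.End K M)) : Set (Module.End K M) :=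
  {T | (∀ a : A, T * aId K a - aId K a * T ∈ E) ∧
       (∀ m n : M, T * aId K (q m n) - aId K (q m n) * T
          = EmapK K q (T m) n + EmapK K q (T n) m) ∧
       (∀ x ∈ E, ∃ b : A, T * x - x * T = aId K b)}

variable (K) in
/-- `d = d_{S,T}`: the map `d` on `E_∞ = A × M × M × E` is given by
`d(a, m, n, x) = (σ_S(a) + τ_T(x), (S+T)(m), (S−T)(n), [T, a·id_M] + [S, x])`,
where `σ_S(a)·id_M = [S, a·id_M]` and `τ_T(x)·id_M = [T, x]`. -/
def isDST (q : M →ₗ[A] M →ₗ[A] A) (E : Submodule K (Module.End K M))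
    (S T : Module.End K M) (d : (A × M × M × E) → (A × M × M × E)) : Prop :=
  ∀ (a : A) (m n : M) (x : Module.End K M) (hx : x ∈ E) (sa ta : A),
    S * aId K a - aId K a * S = aId K sa →
    T * x - x * T = aId K ta →
    (d (a, m, n, ⟨x, hx⟩)).1 = sa + ta ∧
    (d (a, m, n, ⟨x, hx⟩)).2.1 = S m + T m ∧
    (d (a, m, n, ⟨x, hx⟩)).2.2.1 = S n - T n ∧
    ((d (a, m, n, ⟨x, hx⟩)).2.2.2 : Module.End K M)
      = (T * aId K a - aId K a * T) + (S * x - x * S)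

variable (K) in
/-- `L_0 = {(a,0,0,x)}`. -/
def L0 (E : Submodule K (Module.End K M)) : Set (A × M × M × E) :=
  {u | u.2.1 = 0 ∧ u.2.2.1 = 0}

variable (K) in
/-- `L_+ = {(0,m,0,0)}`. -/
def Lplus (E : Submodule K (Module.End K M)) : Set (A × M × M × E) :=
  {u | u.1 = 0 ∧ u.2.2.1 = 0 ∧ u.2.2.2 = 0}

variable (K) in
/-- `L_- = {(0,0,n,0)}`. -/
def Lminus (E : Submodule K (Module.End K M)) : Set (A × M × M × E) :=
  {u | u.1 = 0 ∧ u.2.1 = 0 ∧ u.2.2.2 = 0}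

variable (K) in
/-- The bracket `[(S,T),(S',T')] = ([S,S'] + [T,T'], [S,T'] + [T,S'])`. -/
def brST (u v : Module.End K M × Module.End K M) : Module.End K M × Module.End K M :=
  (u.1 * v.1 - v.1 * u.1 + (u.2 * v.2 - v.2 * u.2),
   u.1 * v.2 - v.2 * u.1 + (u.2 * v.1 - v.1 * u.2))

set_option linter.unusedSectionVars false

lemma aId_apply (a : A) (p : M) : aId K a p = a • p := rfl

lemma aId_add (a b : A) : aId K (M := M) (a + b) = aId K a + aId K b := by
  ext p; simp [aId_apply, add_smul]

lemma aId_sub (a b : A) : aId K (M := M) (a - b) = aId K a - aId K b := by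
  ext p; simp [aId_apply, sub_smul]

lemma aId_zero : aId K (M := M) (0 : A) = 0 := by ext p; simp [aId_apply]

lemma aId_ksmul (c : K) (a : A) : aId K (M := M) (c • a) = c • aId K a := by
  ext p; simp [aId_apply, smul_assoc]

lemma aId_inj (hann : ∀ a : A, (∀ p : M, a • p = 0) → a = 0) {a b : A}
    (h : aId K (M := M) a = aId K b) : a = b := by
  have h2 : a - b = 0 := hann _ fun p => by
    have := LinearMap.congr_fun h p
    simp only [aId_apply] at this
    simp [sub_smul, this]
  exact sub_eq_zero.mp h2

lemma EmapK_apply (q : M →ₗ[A] M →ₗ[A] A) (m n p : M) :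
    EmapK K q m n p = q n p • m - q m p • n := rfl

lemma aId_comm_of_Alin {x : Module.End K M} (hx : ∀ (a : A) (p : M), x (a • p) = a • x p)
    (a : A) : aId K a * x = x * aId K a := by
  ext p
  simp only [Module.End.mul_apply, aId_apply]
  exact (hx a p).symm

lemma EmapK_swap (q : M →ₗ[A] M →ₗ[A] A) (m n : M) :
    EmapK K q n m = - EmapK K q m n := by
  ext p; simp [EmapK_apply]

lemma EmapK_add_left (q : M →ₗ[A] M →ₗ[A] A) (m m' n : M) :
    EmapK K q (m + m') n = EmapK K q m n + EmapK K q m' n := by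
  ext p
  simp only [EmapK_apply, LinearMap.add_apply, map_add, LinearMap.add_apply]
  module

lemma EmapK_add_right (q : M →ₗ[A] M →ₗ[A] A) (m n n' : M) :
    EmapK K q m (n + n') = EmapK K q m n + EmapK K q m n' := by
  ext p
  simp only [EmapK_apply, LinearMap.add_apply, map_add, LinearMap.add_apply]
  module

lemma EmapK_sub_left (q : M →ₗ[A] M →ₗ[A] A) (m m' n : M) :
    EmapK K q (m - m') n = EmapK K q m n - EmapK K q m' n := by
  ext p
  simp only [EmapK_apply, LinearMap.sub_apply, map_sub, LinearMap.sub_apply]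
  module

lemma S_comm_Emap (q : M →ₗ[A] M →ₗ[A] A) (hq : ∀ m n : M, q m n = q n m)
    {S : Module.End K M}
    (hS2 : ∀ m n : M, S * aId K (q m n) - aId K (q m n) * S
        = aId K (q (S m) n + q (S n) m)) (m n : M) :
    S * EmapK K q m n - EmapK K q m n * S = EmapK K q (S m) n + EmapK K q m (S n) := by
  have hpt : ∀ (m' n' p : M),
      S (q m' n' • p) = q m' n' • S p + (q (S m') n' + q (S n') m') • p := by
    intro m' n' p
    have h := LinearMap.congr_fun (hS2 m' n') p
    simp only [LinearMap.sub_apply, Module.End.mul_apply, aId_apply] at h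
    linear_combination (norm := module) h
  ext p
  simp only [LinearMap.sub_apply, Module.End.mul_apply, LinearMap.add_apply, EmapK_apply,
    map_sub]
  rw [hpt n p m, hpt m p n, hq (S p) n, hq (S p) m]
  module

lemma T_comm_Emap (q : M →ₗ[A] M →ₗ[A] A) (hq : ∀ m n : M, q m n = q n m)
    {T : Module.End K M}
    (hT2 : ∀ m n : M, T * aId K (q m n) - aId K (q m n) * T
        = EmapK K q (T m) n + EmapK K q (T n) m) (m n : M) :
    T * EmapK K q m n - EmapK K q m n * T = aId K (q (T m) n - q (T n) m) := by
  have hpt : ∀ (m' n' p : M),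
      T (q m' n' • p) = q m' n' • T p + (q n' p • T m' - q (T m') p • n')
        + (q m' p • T n' - q (T n') p • m') := by
    intro m' n' p
    have h := LinearMap.congr_fun (hT2 m' n') p
    simp only [LinearMap.sub_apply, Module.End.mul_apply, LinearMap.add_apply, aId_apply,
      EmapK_apply] at h
    linear_combination (norm := module) h
  ext p
  simp only [LinearMap.sub_apply, Module.End.mul_apply, aId_apply, EmapK_apply, map_sub]
  rw [hpt n p m, hpt m p n, hq p m, hq p n, hq n m, hq (T p) m, hq (T p) n]
  module

lemma aId_mul (a b : A) : aId K (M := M) a * aId K b = aId K (a * b) := by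
  ext p; simp [aId_apply, mul_smul]

lemma comm_comm_TA {T x' : Module.End K M}
    (hx' : ∀ (a : A) (p : M), x' (a • p) = a • x' p)
    {b : A} (hTx' : T * x' - x' * T = aId K b) (a : A) :
    (T * aId K a - aId K a * T) * x' - x' * (T * aId K a - aId K a * T) = 0 := by
  have h1 : aId K (M := M) a * x' = x' * aId K a := aId_comm_of_Alin hx' a
  have key : (T * aId K a - aId K a * T) * x' - x' * (T * aId K a - aId K a * T)
      = T * (aId K a * x' - x' * aId K a) - (aId K a * x' - x' * aId K a) * T
        + ((T * x' - x' * T) * aId K a - aId K a * (T * x' - x' * T)) := by noncomm_ring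
  rw [key, h1, sub_self, hTx', aId_mul, aId_mul, mul_comm b a]
  simp

lemma comm_comm_br {T x x' : Module.End K M}
    (hx : ∀ (a : A) (p : M), x (a • p) = a • x p)
    (hx' : ∀ (a : A) (p : M), x' (a • p) = a • x' p)
    {b b' : A} (hTx : T * x - x * T = aId K b) (hTx' : T * x' - x' * T = aId K b') :
    T * (x * x' - x' * x) - (x * x' - x' * x) * T = 0 := by
  have key : T * (x * x' - x' * x) - (x * x' - x' * x) * T
      = (T * x - x * T) * x' + x * (T * x' - x' * T)
        - ((T * x' - x' * T) * x + x' * (T * x - x * T)) := by noncomm_ring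
  rw [key, hTx, hTx', aId_comm_of_Alin hx' b, aId_comm_of_Alin hx b']
  abel

lemma EmapK_sub_right (q : M →ₗ[A] M →ₗ[A] A) (m n n' : M) :
    EmapK K q m (n - n') = EmapK K q m n - EmapK K q m n' := by
  ext p
  simp only [EmapK_apply, LinearMap.sub_apply, map_sub, LinearMap.sub_apply]
  module

lemma exists_dST (q : M →ₗ[A] M →ₗ[A] A) (hq : ∀ m n : M, q m n = q n m)
    (hann : ∀ a : A, (∀ p : M, a • p = 0) → a = 0)
    (E : Submodule K (Module.End K M))
    (hEe : ∀ m n : M, EmapK K q m n ∈ E)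
    (hEo : (E : Set (Module.End K M)) ⊆ ospK K q)
    (hbr : ∀ x ∈ E, ∀ y ∈ E, x * y - y * x ∈ E)
    {S T : Module.End K M}
    (hS : S ∈ SE K q (E : Set (Module.End K M)))
    (hT : T ∈ TE K q (E : Set (Module.End K M))) :
    ∃ d : (A × M × M × E) → (A × M × M × E), IsLinearMap K d ∧
      (∀ u v, d (brEinf K q E hEe hbr u v)
          = brEinf K q E hEe hbr (d u) v + brEinf K q E hEe hbr u (d v)) ∧
      ((∀ u ∈ L0 K E, d u ∈ L0 K E) ∧ (∀ u ∈ Lplus K E, d u ∈ Lplus K E) ∧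
        (∀ u ∈ Lminus K E, d u ∈ Lminus K E)) ∧
      isDST K q E S T d := by
  obtain ⟨hS1, hS2, hS3⟩ := hS
  obtain ⟨hT1, hT2, hT3⟩ := hT
  have hAl : ∀ x ∈ E, ∀ (a : A) (p : M), x (a • p) = a • x p := fun x hx => (hEo hx).1
  have hinj : ∀ {a b : A}, aId K (M := M) a = aId K b → a = b := fun h => aId_inj hann h
  set σ : A → A := fun a => Classical.choose (hS1 a) with hσdef
  have σspec : ∀ a : A, S * aId K a - aId K a * S = aId K (σ a) :=
    fun a => Classical.choose_spec (hS1 a)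
  set τ : E → A := fun x => Classical.choose (hT3 x x.2) with hτdef
  have τspec : ∀ x : E, T * (x : Module.End K M) - (x : Module.End K M) * T
      = aId K (τ x) := fun x => Classical.choose_spec (hT3 x x.2)
  have σadd : ∀ a b : A, σ (a + b) = σ a + σ b := by
    intro a b
    apply hinj
    rw [aId_add, ← σspec, ← σspec, ← σspec, aId_add]
    noncomm_ring
  have σsub : ∀ a b : A, σ (a - b) = σ a - σ b := by
    intro a b
    apply hinj
    rw [aId_sub, ← σspec, ← σspec, ← σspec, aId_sub]
    noncomm_ring
  have σsmul : ∀ (c : K) (a : A), σ (c • a) = c • σ a := by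
    intro c a
    apply hinj
    rw [aId_ksmul, ← σspec, ← σspec, aId_ksmul, smul_sub, mul_smul_comm, smul_mul_assoc]
  have σ0 : σ 0 = 0 := by
    apply hinj
    rw [aId_zero, ← σspec, aId_zero]
    noncomm_ring
  have σq : ∀ m n : M, σ (q m n) = q (S m) n + q (S n) m := by
    intro m n
    apply hinj
    rw [← σspec, hS2]
  have τadd : ∀ x y : E, τ (x + y) = τ x + τ y := by
    intro x y
    apply hinj
    rw [aId_add, ← τspec, ← τspec, ← τspec, Submodule.coe_add]
    noncomm_ring
  have τsmul : ∀ (c : K) (x : E), τ (c • x) = c • τ x := by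
    intro c x
    apply hinj
    rw [aId_ksmul, ← τspec, ← τspec, Submodule.coe_smul, smul_sub, mul_smul_comm,
      smul_mul_assoc]
  have τ0 : τ 0 = 0 := by
    apply hinj
    rw [aId_zero, ← τspec, Submodule.coe_zero]
    noncomm_ring
  have τE : ∀ m n : M, τ ⟨EmapK K q m n, hEe m n⟩ = q (T m) n - q (T n) m := by
    intro m n
    apply hinj
    rw [← τspec]
    exact T_comm_Emap q hq hT2 m n
  have τbr : ∀ x y : E, τ ⟨(x : Module.End K M) * y - (y : Module.End K M) * x,
      hbr _ x.2 _ y.2⟩ = 0 := by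
    intro x y
    apply hinj
    rw [aId_zero, ← τspec]
    exact comm_comm_br (hAl _ x.2) (hAl _ y.2) (τspec x) (τspec y)
  have hσp : ∀ (b : A) (p : M), σ b • p = S (b • p) - b • S p := by
    intro b p
    have h := LinearMap.congr_fun (σspec b) p
    simp only [LinearMap.sub_apply, Module.End.mul_apply, aId_apply] at h
    rw [← h]
  have hτp : ∀ (y : E) (p : M), τ y • p = T ((y : Module.End K M) p)
      - (y : Module.End K M) (T p) := by
    intro y p
    have h := LinearMap.congr_fun (τspec y) p
    simp only [LinearMap.sub_apply, Module.End.mul_apply, aId_apply] at h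
    rw [← h]
  refine ⟨fun u => (σ u.1 + τ u.2.2.2, (S + T) u.2.1, (S - T) u.2.2.1,
    ⟨(T * aId K u.1 - aId K u.1 * T) +
      (S * (u.2.2.2 : Module.End K M) - (u.2.2.2 : Module.End K M) * S),
     add_mem (hT1 u.1) (hS3 _ u.2.2.2.2)⟩), ?_, ?_, ?_, ?_⟩
  · constructor
    · rintro ⟨a, m, n, x⟩ ⟨a', m', n', x'⟩
      simp only [Prod.mk_add_mk, Prod.ext_iff, Subtype.ext_iff, Submodule.coe_add]
      refine ⟨?_, ?_, ?_, ?_⟩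
      · rw [σadd, τadd]; ring
      · rw [map_add]
      · rw [map_add]
      · rw [aId_add]; noncomm_ring
    · rintro c ⟨a, m, n, x⟩
      simp only [Prod.smul_mk, Prod.ext_iff, Subtype.ext_iff, Submodule.coe_smul,
        Prod.smul_fst, Prod.smul_snd]
      refine ⟨?_, ?_, ?_, ?_⟩
      · rw [σsmul, τsmul, smul_add]
      · rw [map_smul]
      · rw [map_smul]
      · simp only [aId_ksmul, smul_sub, smul_add, mul_smul_comm, smul_mul_assoc]
  · rintro ⟨a, m, n, x⟩ ⟨a', m', n', x'⟩
    simp only [brEinf, Prod.mk_add_mk, Prod.ext_iff, Subtype.ext_iff, Submodule.coe_add]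
    have e4 : ∀ (h : EmapK K q m n' + EmapK K q n m'
        + ((x : Module.End K M) * (x' : Module.End K M)
          - (x' : Module.End K M) * (x : Module.End K M)) ∈ E),
        (⟨_, h⟩ : E) = ⟨EmapK K q m n', hEe m n'⟩ + ⟨EmapK K q n m', hEe n m'⟩
          + ⟨(x : Module.End K M) * (x' : Module.End K M)
              - (x' : Module.End K M) * (x : Module.End K M), hbr _ x.2 _ x'.2⟩ :=
      fun h => Subtype.ext rfl
    refine ⟨?_, ?_, ?_, ?_⟩
    · rw [e4, τadd, τadd, τE, τE, τbr, σsub, σq, σq]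
      simp only [LinearMap.add_apply, LinearMap.sub_apply, map_add, map_sub]
      rw [hq (S n') m, hq (T n') m, hq (S m') n, hq (T m') n]
      ring
    · simp only [map_add, map_sub, map_neg, LinearMap.add_apply, LinearMap.sub_apply,
        Module.End.mul_apply, aId_apply, add_smul, smul_add, smul_sub]
      rw [hσp a m', hσp a' m, hτp x m', hτp x' m]
      module
    · simp only [map_add, map_sub, map_neg, LinearMap.add_apply, LinearMap.sub_apply,
        Module.End.mul_apply, aId_apply, add_smul, smul_add, smul_sub, smul_neg, neg_smul]
      rw [hσp a n', hσp a' n, hτp x n', hτp x' n]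
      module
    · rw [aId_sub]
      have hL : T * (aId K (q m n') - aId K (q n m'))
            - (aId K (q m n') - aId K (q n m')) * T
          + (S * (EmapK K q m n' + EmapK K q n m'
              + ((x : Module.End K M) * (x' : Module.End K M)
                - (x' : Module.End K M) * (x : Module.End K M)))
            - (EmapK K q m n' + EmapK K q n m'
              + ((x : Module.End K M) * (x' : Module.End K M)
                - (x' : Module.End K M) * (x : Module.End K M))) * S)
          = (T * aId K (q m n') - aId K (q m n') * T)
            - (T * aId K (q n m') - aId K (q n m') * T)
            + (S * EmapK K q m n' - EmapK K q m n' * S)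
            + (S * EmapK K q n m' - EmapK K q n m' * S)
            + ((S * (x : Module.End K M) - (x : Module.End K M) * S)
                * (x' : Module.End K M)
              - (x' : Module.End K M)
                * (S * (x : Module.End K M) - (x : Module.End K M) * S))
            + ((x : Module.End K M)
                * (S * (x' : Module.End K M) - (x' : Module.End K M) * S)
              - (S * (x' : Module.End K M) - (x' : Module.End K M) * S)
                * (x : Module.End K M)) := by noncomm_ring
      rw [hL, hT2 m n', hT2 n m', S_comm_Emap q hq hS2 m n', S_comm_Emap q hq hS2 n m']
      have hR1 : ((T * aId K a - aId K a * T)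
            + (S * (x : Module.End K M) - (x : Module.End K M) * S))
              * (x' : Module.End K M)
          - (x' : Module.End K M) * ((T * aId K a - aId K a * T)
            + (S * (x : Module.End K M) - (x : Module.End K M) * S))
          = ((T * aId K a - aId K a * T) * (x' : Module.End K M)
              - (x' : Module.End K M) * (T * aId K a - aId K a * T))
            + ((S * (x : Module.End K M) - (x : Module.End K M) * S)
                * (x' : Module.End K M)
              - (x' : Module.End K M)
                * (S * (x : Module.End K M) - (x : Module.End K M) * S)) := by
        noncomm_ring
      have hR2 : (x : Module.End K M) * ((T * aId K a' - aId K a' * T)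
            + (S * (x' : Module.End K M) - (x' : Module.End K M) * S))
          - ((T * aId K a' - aId K a' * T)
            + (S * (x' : Module.End K M) - (x' : Module.End K M) * S))
              * (x : Module.End K M)
          = -((T * aId K a' - aId K a' * T) * (x : Module.End K M)
              - (x : Module.End K M) * (T * aId K a' - aId K a' * T))
            + ((x : Module.End K M)
                * (S * (x' : Module.End K M) - (x' : Module.End K M) * S)
              - (S * (x' : Module.End K M) - (x' : Module.End K M) * S)
                * (x : Module.End K M)) := by noncomm_ring
      rw [hR1, hR2, comm_comm_TA (hAl _ x'.2) (τspec x') a,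
        comm_comm_TA (hAl _ x.2) (τspec x) a']
      simp only [LinearMap.add_apply, LinearMap.sub_apply]
      rw [EmapK_add_left, EmapK_sub_left, EmapK_sub_right, EmapK_add_right,
        EmapK_swap q m (T n'), EmapK_swap q n (T m')]
      abel
  · refine ⟨?_, ?_, ?_⟩
    · rintro ⟨a, m, n, x⟩ ⟨h1, h2⟩
      exact ⟨by simpa using congrArg (S + T) h1, by simpa using congrArg (S - T) h2⟩
    · rintro ⟨a, m, n, x⟩ ⟨h1, h2, h3⟩
      dsimp only [L0, Lplus, Set.mem_setOf_eq] at *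
      refine ⟨?_, ?_, ?_⟩
      · rw [h1, h3, σ0, τ0, add_zero]
      · simpa using congrArg (S - T) h2
      · apply Subtype.ext
        simp only [h1, h3, aId_zero, Submodule.coe_zero]
        noncomm_ring
    · rintro ⟨a, m, n, x⟩ ⟨h1, h2, h3⟩
      dsimp only [Lminus, Set.mem_setOf_eq] at *
      refine ⟨?_, ?_, ?_⟩
      · rw [h1, h3, σ0, τ0, add_zero]
      · simpa using congrArg (S + T) h2
      · apply Subtype.ext
        simp only [h1, h3, aId_zero, Submodule.coe_zero]
        noncomm_ring
  · intro a m n x hx sa ta hsa hta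
    have h1 : σ a = sa := hinj (by rw [← σspec, hsa])
    have h2 : τ ⟨x, hx⟩ = ta := hinj (by rw [← τspec ⟨x, hx⟩, hta])
    exact ⟨by simp [h1, h2], LinearMap.add_apply S T m, LinearMap.sub_apply S T n, rfl⟩

lemma two_smul_cancel {N : Type*} [AddCommGroup N] [Module K N] {w w' : N}
    (h : (2 : K) • w = (2 : K) • w') : w = w' := by
  have := congrArg (fun z => ⅟(2 : K) • z) h
  simpa [invOf_smul_smul] using this

lemma EmapK_zero_left (q : M →ₗ[A] M →ₗ[A] A) (n : M) : EmapK K q 0 n = 0 := by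
  ext p; simp [EmapK_apply]

lemma EmapK_zero_right (q : M →ₗ[A] M →ₗ[A] A) (m : M) : EmapK K q m 0 = 0 := by
  ext p; simp [EmapK_apply]

lemma EmapK_ksmul_left (q : M →ₗ[A] M →ₗ[A] A) (c : K) (m n : M) :
    EmapK K q (c • m) n = c • EmapK K q m n := by
  ext p
  simp only [EmapK_apply, LinearMap.map_smul_of_tower, LinearMap.smul_apply, smul_sub]
  rw [smul_comm (q n p) c m, smul_assoc]

lemma EmapK_ksmul_right (q : M →ₗ[A] M →ₗ[A] A) (c : K) (m n : M) :
    EmapK K q m (c • n) = c • EmapK K q m n := by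
  ext p
  simp only [EmapK_apply, LinearMap.map_smul_of_tower, LinearMap.smul_apply, smul_sub]
  rw [smul_comm (q m p) c n, smul_assoc]

lemma prod4_eq {α β γ δ : Type*} (p : α × β × γ × δ) {a : α} {b : β} {c : γ} {e : δ}
    (h1 : p.1 = a) (h2 : p.2.1 = b) (h3 : p.2.2.1 = c) (h4 : p.2.2.2 = e) :
    p = (a, b, c, e) := by
  obtain ⟨w, x, y, z⟩ := p
  simp_all

lemma deriv_to_ST (q : M →ₗ[A] M →ₗ[A] A) (hq : ∀ m n : M, q m n = q n m)
    (hann : ∀ a : A, (∀ p : M, a • p = 0) → a = 0)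
    (E : Submodule K (Module.End K M))
    (hEe : ∀ m n : M, EmapK K q m n ∈ E)
    (hEo : (E : Set (Module.End K M)) ⊆ ospK K q)
    (hbr : ∀ x ∈ E, ∀ y ∈ E, x * y - y * x ∈ E)
    (d : (A × M × M × E) → (A × M × M × E)) (hlin : IsLinearMap K d)
    (hder : ∀ u v, d (brEinf K q E hEe hbr u v)
        = brEinf K q E hEe hbr (d u) v + brEinf K q E hEe hbr u (d v))
    (h0 : ∀ u ∈ L0 K E, d u ∈ L0 K E) (hp : ∀ u ∈ Lplus K E, d u ∈ Lplus K E)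
    (hm : ∀ u ∈ Lminus K E, d u ∈ Lminus K E) :
    ∃ S ∈ SE K q (E : Set (Module.End K M)), ∃ T ∈ TE K q (E : Set (Module.End K M)),
      isDST K q E S T d := by
  classical
  have hinj : ∀ {a b : A}, aId K (M := M) a = aId K b → a = b := fun h => aId_inj hann h
  have hPlin : IsLinearMap K (fun m : M => (d (0, m, 0, 0)).2.1) := by
    constructor
    · intro m m'
      have h : ((0 : A), m + m', (0 : M), (0 : E)) = (0, m, 0, 0) + (0, m', 0, 0) := by
        simp
      rw [h, hlin.map_add]
      rfl
    · intro c m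
      have h : ((0 : A), c • m, (0 : M), (0 : E)) = c • ((0 : A), m, (0 : M), (0 : E)) := by
        simp
      rw [h, hlin.map_smul]
      rfl
  have hQlin : IsLinearMap K (fun n : M => (d (0, 0, n, 0)).2.2.1) := by
    constructor
    · intro n n'
      have h : ((0 : A), (0 : M), n + n', (0 : E)) = (0, 0, n, 0) + (0, 0, n', 0) := by
        simp
      rw [h, hlin.map_add]
      rfl
    · intro c n
      have h : ((0 : A), (0 : M), c • n, (0 : E)) = c • ((0 : A), (0 : M), n, (0 : E)) := by
        simp
      rw [h, hlin.map_smul]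
      rfl
  set P : Module.End K M := IsLinearMap.mk' _ hPlin with hPdef
  set Q : Module.End K M := IsLinearMap.mk' _ hQlin with hQdef
  set fA : A → E → A := fun a x => (d (a, 0, 0, x)).1 with hfAdef
  set g : A → E → Module.End K M := fun a x => ((d (a, 0, 0, x)).2.2.2 : Module.End K M)
    with hgdef
  have gmem : ∀ (a : A) (x : E), g a x ∈ E := fun a x => (d (a, 0, 0, x)).2.2.2.2
  have hd0 : ∀ (a : A) (x : E), d (a, 0, 0, x) = (fA a x, 0, 0, ⟨g a x, gmem a x⟩) := by
    intro a x
    have h := h0 (a, 0, 0, x) ⟨rfl, rfl⟩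
    exact prod4_eq _ rfl h.1 h.2 rfl
  have hdp : ∀ m : M, d (0, m, 0, 0) = (0, P m, 0, 0) := by
    intro m
    have h := hp (0, m, 0, 0) ⟨rfl, rfl, rfl⟩
    exact prod4_eq _ h.1 rfl h.2.1 h.2.2
  have hdm : ∀ n : M, d (0, 0, n, 0) = (0, 0, Q n, 0) := by
    intro n
    have h := hm (0, 0, n, 0) ⟨rfl, rfl, rfl⟩
    exact prod4_eq _ h.1 h.2.1 rfl h.2.2
  have hbr0p : ∀ (a : A) (x : E) (m' : M), brEinf K q E hEe hbr (a, 0, 0, x) (0, m', 0, 0)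
      = (0, a • m' + (x : Module.End K M) m', 0, 0) := by
    intro a x m'
    refine prod4_eq _ ?_ ?_ ?_ ?_
    · simp [brEinf]
    · simp [brEinf]
    · simp [brEinf]
    · apply Subtype.ext
      simp [brEinf, EmapK_zero_left, EmapK_zero_right]
  have hbr0m : ∀ (a : A) (x : E) (n' : M), brEinf K q E hEe hbr (a, 0, 0, x) (0, 0, n', 0)
      = (0, 0, -(a • n') + (x : Module.End K M) n', 0) := by
    intro a x n'
    refine prod4_eq _ ?_ ?_ ?_ ?_
    · simp [brEinf]
    · simp [brEinf]
    · simp [brEinf]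
    · apply Subtype.ext
      simp [brEinf, EmapK_zero_left, EmapK_zero_right]
  have hbrpm : ∀ m n : M, brEinf K q E hEe hbr (0, m, 0, 0) (0, 0, n, 0)
      = (q m n, 0, 0, ⟨EmapK K q m n, hEe m n⟩) := by
    intro m n
    refine prod4_eq _ ?_ ?_ ?_ ?_
    · simp [brEinf]
    · simp [brEinf]
    · simp [brEinf]
    · apply Subtype.ext
      simp [brEinf, EmapK_zero_left, EmapK_zero_right]
  have R1 : ∀ (a : A) (x : E) (p : M), P (a • p + (x : Module.End K M) p)
      = (fA a x • p + g a x p) + (a • P p + (x : Module.End K M) (P p)) := by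
    intro a x p
    have h := hder (a, 0, 0, x) (0, p, 0, 0)
    rw [hbr0p a x p, hdp (a • p + (x : Module.End K M) p), hd0 a x, hdp p,
      hbr0p (fA a x) ⟨g a x, gmem a x⟩ p, hbr0p a x (P p)] at h
    simpa using congrArg (fun w => w.2.1) h
  have R2 : ∀ (a : A) (x : E) (p : M), Q (-(a • p) + (x : Module.End K M) p)
      = (-(fA a x • p) + g a x p) + (-(a • Q p) + (x : Module.End K M) (Q p)) := by
    intro a x p
    have h := hder (a, 0, 0, x) (0, 0, p, 0)
    rw [hbr0m a x p, hdm (-(a • p) + (x : Module.End K M) p), hd0 a x, hdm p,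
      hbr0m (fA a x) ⟨g a x, gmem a x⟩ p, hbr0m a x (Q p)] at h
    simpa using congrArg (fun w => w.2.2.1) h
  have R3 : ∀ m n : M, d (q m n, 0, 0, ⟨EmapK K q m n, hEe m n⟩)
      = (q (P m) n, 0, 0, ⟨EmapK K q (P m) n, hEe _ n⟩)
        + (q m (Q n), 0, 0, ⟨EmapK K q m (Q n), hEe m _⟩) := by
    intro m n
    have h := hder (0, m, 0, 0) (0, 0, n, 0)
    rw [hbrpm m n, hdp m, hdm n, hbrpm (P m) n, hbrpm m (Q n)] at h
    exact h
  have R3a : ∀ m n : M, fA (q m n) ⟨EmapK K q m n, hEe m n⟩ = q (P m) n + q m (Q n) := by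
    intro m n
    have h2 := congrArg (fun w => w.1) (R3 m n)
    simp only [Prod.fst_add] at h2
    exact h2
  have R3b : ∀ m n : M, g (q m n) ⟨EmapK K q m n, hEe m n⟩
      = EmapK K q (P m) n + EmapK K q m (Q n) := by
    intro m n
    have h2 := congrArg (fun w => (w.2.2.2 : Module.End K M)) (R3 m n)
    simp only [Prod.snd_add, Submodule.coe_add] at h2
    exact h2
  have hsplit : ∀ (a : A) (x : E), d (a, 0, 0, x) = d (a, 0, 0, 0) + d (0, 0, 0, x) := by
    intro a x
    rw [← hlin.map_add]
    congr 1
    simp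
  have fAsplit : ∀ (a : A) (x : E), fA a x = fA a 0 + fA 0 x := by
    intro a x
    have h := congrArg (fun w => w.1) (hsplit a x)
    simp only [Prod.fst_add] at h
    exact h
  have gsplit : ∀ (a : A) (x : E), g a x = g a 0 + g 0 x := by
    intro a x
    have h := congrArg (fun w => (w.2.2.2 : Module.End K M)) (hsplit a x)
    simp only [Prod.snd_add, Submodule.coe_add] at h
    exact h
  have hdneg : ∀ u, d (-u) = -(d u) := by
    intro u
    have := hlin.map_smul (-1 : K) u
    simpa [neg_one_smul] using this
  have fneg : ∀ x : E, fA 0 (-x) = -(fA 0 x) := by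
    intro x
    have h : ((0 : A), (0 : M), (0 : M), -x) = -((0 : A), (0 : M), (0 : M), x) := by simp
    have h2 : d ((0 : A), (0 : M), (0 : M), -x) = -(d ((0 : A), (0 : M), (0 : M), x)) := by
      rw [h, hdneg]
    have h3 := congrArg (fun w => w.1) h2
    simp only [Prod.fst_neg] at h3
    exact h3
  have gneg : ∀ x : E, g 0 (-x) = -(g 0 x) := by
    intro x
    have h : ((0 : A), (0 : M), (0 : M), -x) = -((0 : A), (0 : M), (0 : M), x) := by simp
    have h2 : d ((0 : A), (0 : M), (0 : M), -x) = -(d ((0 : A), (0 : M), (0 : M), x)) := by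
      rw [h, hdneg]
    have h3 := congrArg (fun w => (w.2.2.2 : Module.End K M)) h2
    simp only [Prod.snd_neg, Submodule.coe_neg] at h3
    exact h3
  set S : Module.End K M := ⅟(2 : K) • (P + Q) with hSdef
  set T : Module.End K M := ⅟(2 : K) • (P - Q) with hTdef
  have h2S : (2 : K) • S = P + Q := smul_invOf_smul (2 : K) _
  have h2T : (2 : K) • T = P - Q := smul_invOf_smul (2 : K) _
  have hSw : ∀ w : M, (2 : K) • S w = P w + Q w := by
    intro w
    have := LinearMap.congr_fun h2S w
    simpa using this
  have hTw : ∀ w : M, (2 : K) • T w = P w - Q w := by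
    intro w
    have := LinearMap.congr_fun h2T w
    simpa using this
  have hPST : ∀ w : M, P w = S w + T w := by
    intro w
    apply two_smul_cancel (K := K)
    rw [smul_add, hSw, hTw, two_smul]
    abel
  have hQST : ∀ w : M, Q w = S w - T w := by
    intro w
    apply two_smul_cancel (K := K)
    rw [smul_sub, hSw, hTw, two_smul]
    abel
  have FactS1 : ∀ a : A, S * aId K a - aId K a * S = aId K (fA a 0) := by
    intro a
    apply two_smul_cancel (K := K)
    rw [smul_sub, ← smul_mul_assoc, ← mul_smul_comm, h2S, two_smul]
    ext p
    simp only [LinearMap.sub_apply, Module.End.mul_apply, LinearMap.add_apply, aId_apply,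
      LinearMap.smul_apply, smul_add]
    have h1 := R1 a 0 p
    have h2 := R2 a 0 p
    simp only [ZeroMemClass.coe_zero, LinearMap.zero_apply, add_zero] at h1 h2
    rw [map_neg] at h2
    linear_combination (norm := module) h1 - h2
  have FactT1 : ∀ a : A, T * aId K a - aId K a * T = g a 0 := by
    intro a
    apply two_smul_cancel (K := K)
    rw [smul_sub, ← smul_mul_assoc, ← mul_smul_comm, h2T, two_smul]
    ext p
    simp only [LinearMap.sub_apply, Module.End.mul_apply, LinearMap.add_apply, aId_apply,
      LinearMap.smul_apply]
    have h1 := R1 a 0 p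
    have h2 := R2 a 0 p
    simp only [ZeroMemClass.coe_zero, LinearMap.zero_apply, add_zero] at h1 h2
    rw [map_neg] at h2
    linear_combination (norm := module) h1 + h2
  have FactS3 : ∀ x : E, S * (x : Module.End K M) - (x : Module.End K M) * S = g 0 x := by
    intro x
    apply two_smul_cancel (K := K)
    rw [smul_sub, ← smul_mul_assoc, ← mul_smul_comm, h2S, two_smul]
    ext p
    simp only [LinearMap.sub_apply, Module.End.mul_apply, LinearMap.add_apply,
      LinearMap.smul_apply, map_add, map_sub]
    have h1 := R1 0 x p
    have h2 := R2 0 x p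
    simp only [zero_smul, neg_zero, zero_add, map_zero] at h1 h2
    linear_combination (norm := module) h1 + h2
  have FactT3 : ∀ x : E, T * (x : Module.End K M) - (x : Module.End K M) * T
      = aId K (fA 0 x) := by
    intro x
    apply two_smul_cancel (K := K)
    rw [smul_sub, ← smul_mul_assoc, ← mul_smul_comm, h2T, two_smul]
    ext p
    simp only [LinearMap.sub_apply, Module.End.mul_apply, LinearMap.add_apply, aId_apply,
      LinearMap.smul_apply, map_add, map_sub]
    have h1 := R1 0 x p
    have h2 := R2 0 x p
    simp only [zero_smul, neg_zero, zero_add, map_zero] at h1 h2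
    linear_combination (norm := module) h1 - h2
  have hEswap : ∀ m n : M, (⟨EmapK K q n m, hEe n m⟩ : E)
      = -(⟨EmapK K q m n, hEe m n⟩ : E) := by
    intro m n
    apply Subtype.ext
    simpa using EmapK_swap q m n
  have hq2 : ∀ w u : M, (2 : K) • q w u = q ((2 : K) • w) u := by
    intro w u
    rw [LinearMap.map_smul_of_tower, LinearMap.smul_apply]
  have FactS2A : ∀ m n : M, fA (q m n) 0 = q (S m) n + q (S n) m := by
    intro m n
    apply two_smul_cancel (K := K)
    have e1 := R3a m n
    have e2 := R3a n m
    rw [hq n m, hEswap m n, fAsplit, fneg] at e2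
    rw [fAsplit] at e1
    rw [smul_add, hq2 (S m) n, hq2 (S n) m, hSw m, hSw n]
    simp only [map_add, LinearMap.add_apply]
    rw [hq m (Q n)] at e1
    rw [hq n (Q m)] at e2
    rw [two_smul]
    linear_combination e1 + e2
  have FactT2E : ∀ m n : M, g (q m n) 0 = EmapK K q (T m) n + EmapK K q (T n) m := by
    intro m n
    apply two_smul_cancel (K := K)
    have e1 := R3b m n
    have e2 := R3b n m
    rw [hq n m, hEswap m n, gsplit, gneg] at e2
    rw [gsplit] at e1
    rw [smul_add, ← EmapK_ksmul_left, ← EmapK_ksmul_left, hTw m, hTw n,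
      EmapK_sub_left q, EmapK_sub_left q]
    rw [EmapK_swap q (Q n) m] at e1
    rw [EmapK_swap q (Q m) n] at e2
    rw [two_smul]
    linear_combination (norm := module) e1 + e2
  refine ⟨S, ⟨fun a => ⟨fA a 0, FactS1 a⟩, fun m n => by rw [FactS1, FactS2A],
    fun x hx => by rw [FactS3 ⟨x, hx⟩]; exact gmem 0 ⟨x, hx⟩⟩,
    T, ⟨fun a => by rw [FactT1 a]; exact gmem a 0, fun m n => by rw [FactT1, FactT2E],
    fun x hx => ⟨fA 0 ⟨x, hx⟩, FactT3 ⟨x, hx⟩⟩⟩, ?_⟩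
  intro a m n x hx sa ta hsa hta
  have hdecomp : d (a, m, n, ⟨x, hx⟩)
      = d (a, 0, 0, ⟨x, hx⟩) + d (0, m, 0, 0) + d (0, 0, n, 0) := by
    rw [← hlin.map_add, ← hlin.map_add]
    congr 1
    simp
  have hsa' : fA a 0 = sa := hinj (by rw [← FactS1, hsa])
  have hta' : fA 0 ⟨x, hx⟩ = ta := hinj (by rw [← FactT3, hta])
  refine ⟨?_, ?_, ?_, ?_⟩
  · rw [hdecomp, hd0, hdp, hdm]
    simp only [Prod.mk_add_mk]
    show fA a ⟨x, hx⟩ + 0 + 0 = sa + ta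
    rw [fAsplit, hsa', hta', add_zero, add_zero]
  · rw [hdecomp, hd0, hdp, hdm]
    simp only [Prod.mk_add_mk]
    show 0 + P m + 0 = S m + T m
    rw [zero_add, add_zero]
    exact hPST m
  · rw [hdecomp, hd0, hdp, hdm]
    simp only [Prod.mk_add_mk]
    show 0 + 0 + Q n = S n - T n
    rw [zero_add, zero_add]
    exact hQST n
  · rw [hdecomp, hd0, hdp, hdm]
    simp only [Prod.mk_add_mk]
    show g a ⟨x, hx⟩ + 0 + 0 = _
    rw [add_zero, add_zero, gsplit a ⟨x, hx⟩, ← FactT1 a, ← FactS3 ⟨x, hx⟩]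

lemma prod4_ext {α β γ δ : Type*} {p p' : α × β × γ × δ} (h1 : p.1 = p'.1)
    (h2 : p.2.1 = p'.2.1) (h3 : p.2.2.1 = p'.2.2.1) (h4 : p.2.2.2 = p'.2.2.2) : p = p' := by
  obtain ⟨w, x, y, z⟩ := p
  obtain ⟨w', x', y', z'⟩ := p'
  simp_all


/-- assume `Ann_A(M) = 0`.  A `K`-derivation `d` of `L = E_∞`
preserves the grading (`d(L_0) ⊆ L_0`, `d(L_±) ⊆ L_±`) iff `d = d_{S,T}` for
some `S ∈ S_E`, `T ∈ T_E`; such `S, T` are unique, and `(S,T) ↦ d_{S,T}` is a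
Lie algebra isomorphism from `S_E ⊕ T_E` onto the grading-preserving
`K`-derivations of `L`. -/
theorem stmt15 (q : M →ₗ[A] M →ₗ[A] A) (hq : ∀ m n : M, q m n = q n m)
    (hann : ∀ a : A, (∀ p : M, a • p = 0) → a = 0)
    (E : Submodule K (Module.End K M))
    (hEe : ∀ m n : M, EmapK K q m n ∈ E)
    (hEo : (E : Set (Module.End K M)) ⊆ ospK K q)
    (hbr : ∀ x ∈ E, ∀ y ∈ E, x * y - y * x ∈ E) :
    -- equivalence: grading-preserving derivations are exactly the `d_{S,T}`
    (∀ d : (A × M × M × E) → (A × M × M × E), IsLinearMap K d →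
      (∀ u v, d (brEinf K q E hEe hbr u v)
          = brEinf K q E hEe hbr (d u) v + brEinf K q E hEe hbr u (d v)) →
      (((∀ u ∈ L0 K E, d u ∈ L0 K E) ∧ (∀ u ∈ Lplus K E, d u ∈ Lplus K E) ∧
          (∀ u ∈ Lminus K E, d u ∈ Lminus K E)) ↔
        ∃ S ∈ SE K q (E : Set (Module.End K M)), ∃ T ∈ TE K q (E : Set (Module.End K M)),
          isDST K q E S T d)) ∧
    -- uniqueness of `S` and `T`
    (∀ (d : (A × M × M × E) → (A × M × M × E)) (S T S' T' : Module.End K M),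
      S ∈ SE K q (E : Set (Module.End K M)) → T ∈ TE K q (E : Set (Module.End K M)) →
      S' ∈ SE K q (E : Set (Module.End K M)) → T' ∈ TE K q (E : Set (Module.End K M)) →
      isDST K q E S T d → isDST K q E S' T' d → S = S' ∧ T = T') ∧
    -- the map is well defined and has image in the grading-preserving derivations
    (∀ S ∈ SE K q (E : Set (Module.End K M)), ∀ T ∈ TE K q (E : Set (Module.End K M)),
      ∃ d : (A × M × M × E) → (A × M × M × E), IsLinearMap K d ∧
        (∀ u v, d (brEinf K q E hEe hbr u v)
            = brEinf K q E hEe hbr (d u) v + brEinf K q E hEe hbr u (d v)) ∧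
        ((∀ u ∈ L0 K E, d u ∈ L0 K E) ∧ (∀ u ∈ Lplus K E, d u ∈ Lplus K E) ∧
          (∀ u ∈ Lminus K E, d u ∈ Lminus K E)) ∧
        isDST K q E S T d) ∧
    -- injectivity in `d`
    (∀ (S T : Module.End K M) (d d' : (A × M × M × E) → (A × M × M × E)),
      S ∈ SE K q (E : Set (Module.End K M)) → T ∈ TE K q (E : Set (Module.End K M)) →
      isDST K q E S T d → isDST K q E S T d' → d = d') ∧
    -- `K`-linearity of the correspondence
    (∀ (c : K) (S T S' T' : Module.End K M)
        (d d' : (A × M × M × E) → (A × M × M × E)),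
      S ∈ SE K q (E : Set (Module.End K M)) → T ∈ TE K q (E : Set (Module.End K M)) →
      S' ∈ SE K q (E : Set (Module.End K M)) → T' ∈ TE K q (E : Set (Module.End K M)) →
      isDST K q E S T d → isDST K q E S' T' d' →
      isDST K q E (c • S + S') (c • T + T') (fun u => c • d u + d' u)) ∧
    -- compatibility with the brackets
    (∀ (S T S' T' : Module.End K M) (d d' : (A × M × M × E) → (A × M × M × E)),
      S ∈ SE K q (E : Set (Module.End K M)) → T ∈ TE K q (E : Set (Module.End K M)) →
      S' ∈ SE K q (E : Set (Module.End K M)) → T' ∈ TE K q (E : Set (Module.End K M)) →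
      isDST K q E S T d → isDST K q E S' T' d' →
      isDST K q E (brST K (S, T) (S', T')).1 (brST K (S, T) (S', T')).2
        (fun u => d (d' u) - d' (d u))) := by
  have hinj : ∀ {a b : A}, aId K (M := M) a = aId K b → a = b := fun h => aId_inj hann h
  have hz : ∀ (S : Module.End K M), S * aId K (0 : A) - aId K (0 : A) * S = aId K (0 : A) := by
    intro S
    rw [aId_zero]
    simp
  have hz' : ∀ (S : Module.End K M),
      S * ((0 : E) : Module.End K M) - ((0 : E) : Module.End K M) * S = aId K (0 : A) := by
    intro S
    rw [aId_zero]
    simp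
  refine ⟨?_, ?_, ?_, ?_, ?_, ?_⟩
  · intro d hlin hder
    constructor
    · rintro ⟨h0, hp, hm⟩
      exact deriv_to_ST q hq hann E hEe hEo hbr d hlin hder h0 hp hm
    · rintro ⟨S, hS, T, hT, hd⟩
      refine ⟨?_, ?_, ?_⟩
      · rintro ⟨a, m, n, x⟩ ⟨h1, h2⟩
        obtain ⟨sa, hsa⟩ := hS.1 a
        obtain ⟨ta, hta⟩ := hT.2.2 x x.2
        have h := hd a m n x x.2 sa ta hsa hta
        exact ⟨h.2.1.trans (by rw [show m = 0 from h1]; simp),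
          h.2.2.1.trans (by rw [show n = 0 from h2]; simp)⟩
      · rintro ⟨a, m, n, x⟩ ⟨h1, h2, h3⟩
        obtain rfl : a = 0 := h1
        obtain rfl : n = 0 := h2
        obtain rfl : x = 0 := h3
        have h := hd 0 m 0 0 E.zero_mem 0 0 (hz S) (hz' T)
        refine ⟨h.1.trans (by simp), h.2.2.1.trans (by simp), Subtype.ext
          (h.2.2.2.trans (by rw [aId_zero]; simp))⟩
      · rintro ⟨a, m, n, x⟩ ⟨h1, h2, h3⟩
        obtain rfl : a = 0 := h1
        obtain rfl : m = 0 := h2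
        obtain rfl : x = 0 := h3
        have h := hd 0 0 n 0 E.zero_mem 0 0 (hz S) (hz' T)
        refine ⟨h.1.trans (by simp), h.2.1.trans (by simp), Subtype.ext
          (h.2.2.2.trans (by rw [aId_zero]; simp))⟩
  · intro d S T S' T' hS hT hS' hT' h h'
    have hST : ∀ w : M, S w + T w = S' w + T' w := by
      intro w
      have e1 := (h 0 w 0 0 E.zero_mem 0 0 (hz S) (hz' T)).2.1
      have e2 := (h' 0 w 0 0 E.zero_mem 0 0 (hz S') (hz' T')).2.1
      exact e1.symm.trans e2
    have hST2 : ∀ w : M, S w - T w = S' w - T' w := by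
      intro w
      have e1 := (h 0 0 w 0 E.zero_mem 0 0 (hz S) (hz' T)).2.2.1
      have e2 := (h' 0 0 w 0 E.zero_mem 0 0 (hz S') (hz' T')).2.2.1
      exact e1.symm.trans e2
    constructor
    · ext w
      apply two_smul_cancel (K := K)
      linear_combination (norm := module) hST w + hST2 w
    · ext w
      apply two_smul_cancel (K := K)
      linear_combination (norm := module) hST w - hST2 w
  · intro S hS T hT
    exact exists_dST q hq hann E hEe hEo hbr hS hT
  · intro S T d d' hS hT hd hd'
    funext u
    obtain ⟨sa, hsa⟩ := hS.1 u.1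
    obtain ⟨ta, hta⟩ := hT.2.2 (u.2.2.2 : Module.End K M) u.2.2.2.2
    have h1 := hd u.1 u.2.1 u.2.2.1 (u.2.2.2 : Module.End K M) u.2.2.2.2 sa ta hsa hta
    have h2 := hd' u.1 u.2.1 u.2.2.1 (u.2.2.2 : Module.End K M) u.2.2.2.2 sa ta hsa hta
    exact prod4_ext (h1.1.trans h2.1.symm) (h1.2.1.trans h2.2.1.symm)
      (h1.2.2.1.trans h2.2.2.1.symm) (Subtype.ext (h1.2.2.2.trans h2.2.2.2.symm))
  · intro c S T S' T' d d' hS hT hS' hT' hd hd'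
    intro a m n x hx sa ta hsa hta
    obtain ⟨sa1, hsa1⟩ := hS.1 a
    obtain ⟨ta1, hta1⟩ := hT.2.2 x hx
    obtain ⟨sa2, hsa2⟩ := hS'.1 a
    obtain ⟨ta2, hta2⟩ := hT'.2.2 x hx
    have h1 := hd a m n x hx sa1 ta1 hsa1 hta1
    have h2 := hd' a m n x hx sa2 ta2 hsa2 hta2
    have hsa' : sa = c • sa1 + sa2 := hinj (by
      rw [← hsa, aId_add, aId_ksmul, ← hsa1, ← hsa2]
      simp only [add_mul, mul_add, smul_mul_assoc, mul_smul_comm, smul_sub]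
      abel)
    have hta' : ta = c • ta1 + ta2 := hinj (by
      rw [← hta, aId_add, aId_ksmul, ← hta1, ← hta2]
      simp only [add_mul, mul_add, smul_mul_assoc, mul_smul_comm, smul_sub]
      abel)
    refine ⟨?_, ?_, ?_, ?_⟩
    · simp only [Prod.fst_add, Prod.smul_fst]
      rw [h1.1, h2.1, hsa', hta']
      module
    · simp only [Prod.snd_add, Prod.smul_snd, Prod.fst_add, Prod.smul_fst]
      rw [h1.2.1, h2.2.1]
      simp only [LinearMap.add_apply, LinearMap.smul_apply, smul_add]
      abel
    · simp only [Prod.snd_add, Prod.smul_snd, Prod.fst_add, Prod.smul_fst]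
      rw [h1.2.2.1, h2.2.2.1]
      simp only [LinearMap.sub_apply, LinearMap.add_apply, LinearMap.smul_apply, smul_sub]
      abel
    · simp only [Prod.snd_add, Prod.smul_snd, Submodule.coe_add, Submodule.coe_smul]
      rw [h1.2.2.2, h2.2.2.2]
      simp only [add_mul, mul_add, smul_mul_assoc, mul_smul_comm, smul_add, smul_sub]
      abel
  · intro S T S' T' d d' hS hT hS' hT' hd hd'
    intro a m n x hx sa ta hsa hta
    simp only [brST] at hsa hta ⊢
    obtain ⟨sa1, hsa1⟩ := hS.1 a
    obtain ⟨ta1, hta1⟩ := hT.2.2 x hx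
    obtain ⟨sb1, hsb1⟩ := hS'.1 a
    obtain ⟨tb1, htb1⟩ := hT'.2.2 x hx
    have h1 := hd a m n x hx sa1 ta1 hsa1 hta1
    have h2 := hd' a m n x hx sb1 tb1 hsb1 htb1
    have hXE : (T * aId K a - aId K a * T) + (S * x - x * S) ∈ E :=
      add_mem (hT.1 a) (hS.2.2 x hx)
    have hYE : (T' * aId K a - aId K a * T') + (S' * x - x * S') ∈ E :=
      add_mem (hT'.1 a) (hS'.2.2 x hx)
    have e1 : d (a, m, n, ⟨x, hx⟩) = (sa1 + ta1, S m + T m, S n - T n,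
        ⟨(T * aId K a - aId K a * T) + (S * x - x * S), hXE⟩) :=
      prod4_ext h1.1 h1.2.1 h1.2.2.1 (Subtype.ext h1.2.2.2)
    have e2 : d' (a, m, n, ⟨x, hx⟩) = (sb1 + tb1, S' m + T' m, S' n - T' n,
        ⟨(T' * aId K a - aId K a * T') + (S' * x - x * S'), hYE⟩) :=
      prod4_ext h2.1 h2.2.1 h2.2.2.1 (Subtype.ext h2.2.2.2)
    obtain ⟨sa2, hsa2⟩ := hS.1 (sb1 + tb1)
    obtain ⟨ta2, hta2⟩ := hT.2.2 _ hYE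
    obtain ⟨sb2, hsb2⟩ := hS'.1 (sa1 + ta1)
    obtain ⟨tb2, htb2⟩ := hT'.2.2 _ hXE
    have h3 := hd (sb1 + tb1) (S' m + T' m) (S' n - T' n) _ hYE sa2 ta2 hsa2 hta2
    have h4 := hd' (sa1 + ta1) (S m + T m) (S n - T n) _ hXE sb2 tb2 hsb2 htb2
    refine ⟨?_, ?_, ?_, ?_⟩
    · simp only [Prod.fst_sub]
      rw [e2, e1, h3.1, h4.1]
      apply hinj
      rw [aId_sub, aId_add, aId_add, ← hsa2, ← hta2, ← hsb2, ← htb2, aId_add, aId_add,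
        ← hsa1, ← hta1, ← hsb1, ← htb1]
      rw [aId_add, ← hsa, ← hta]
      noncomm_ring
    · simp only [Prod.snd_sub, Prod.fst_sub]
      rw [e2, e1, h3.2.1, h4.2.1]
      simp only [map_add, map_sub, LinearMap.add_apply, LinearMap.sub_apply,
        Module.End.mul_apply]
      abel
    · simp only [Prod.snd_sub, Prod.fst_sub]
      rw [e2, e1, h3.2.2.1, h4.2.2.1]
      simp only [map_add, map_sub, LinearMap.add_apply, LinearMap.sub_apply,
        Module.End.mul_apply]
      abel
    · simp only [Prod.snd_sub, Submodule.coe_sub]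
      rw [e2, e1, h3.2.2.2, h4.2.2.2]
      rw [aId_add, aId_add, ← hsa1, ← hta1, ← hsb1, ← htb1]
      noncomm_ring
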